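/- Let K be a commutative ring with unity, let v, w : ℤ → K, let α, β ∈ ℤ, and let r be a natural number. Consider the (r+1)×(r+1) matrices A and B over K, indexed by 0 ≤ n, k ≤ r, with entries A(n,k) = (-1)^{n-k} · c^V_{α,β-n+1}[n,k] and B(n,k) = S^V_{α,β-k}[n,k]. Then A and B are inverses of each other, i.e., A·B = I and B·A = I, where I is the identity matrix. -/
import Mathlib


open Finset Polynomial

variable {K : Type*} [CommRing K]

/-- Elementary symmetric function `e_t` of the entries of a list. -/
def esymmList : List K → ℕ → K
  | _, 0 => 1
  | [], _ + 1 => 0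
  | a :: l, t + 1 => a * esymmList l t + esymmList l (t + 1)

/-- Complete homogeneous symmetric function `h_t` of the entries of a list. -/
def hsymmList : List K → ℕ → K
  | _, 0 => 1
  | [], _ + 1 => 0
  | a :: l, t + 1 => a * hsymmList (a :: l) t + hsymmList l (t + 1)
  termination_by l t => (l.length, t)

/-- The V-Stirling number of the first kind
`c^V_{α,β}[n,k] = e_{n-k}(v(α+n-1)w(β), …, v(α)w(β+n-1))`,
set to `0` unless `0 ≤ k ≤ n`. -/
def cV (v w : ℤ → K) (α β n k : ℤ) : K :=
  if 0 ≤ k ∧ k ≤ n then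
    esymmList (List.ofFn fun j : Fin n.toNat =>
      v (α + n - 1 - (j : ℕ)) * w (β + (j : ℕ))) (n - k).toNat
  else 0

/-- The V-Stirling number of the second kind
`S^V_{α,β}[n,k] = h_{n-k}(v(α+k)w(β), …, v(α)w(β+k))`,
set to `0` unless `0 ≤ k ≤ n`. -/
def SV (v w : ℤ → K) (α β n k : ℤ) : K :=
  if 0 ≤ k ∧ k ≤ n then
    hsymmList (List.ofFn fun j : Fin (k.toNat + 1) =>
      v (α + k - (j : ℕ)) * w (β + (j : ℕ))) (n - k).toNat
  else 0

lemma esymmList_zero (l : List K) : esymmList l 0 = 1 := by cases l <;> rfl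

lemma esymmList_cons (x : K) (l : List K) (t : ℕ) :
    esymmList (x :: l) (t+1) = x * esymmList l t + esymmList l (t+1) := rfl

lemma hsymmList_zero (l : List K) : hsymmList l 0 = 1 := by cases l <;> simp [hsymmList]

lemma hsymmList_cons (x : K) (l : List K) (t : ℕ) :
    hsymmList (x :: l) (t+1) = x * hsymmList (x :: l) t + hsymmList l (t+1) := by rw [hsymmList]

lemma hsymmList_nil (t : ℕ) : hsymmList ([] : List K) (t+1) = 0 := by rw [hsymmList]

lemma esymmList_eq_zero (l : List K) : ∀ t, l.length < t → esymmList l t = 0 := by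
  induction l with
  | nil =>
      intro t ht
      cases t with
      | zero => omega
      | succ t => rfl
  | cons x l ih =>
      intro t ht
      cases t with
      | zero => omega
      | succ t =>
          rw [esymmList_cons, ih t (by simp at ht ⊢; omega),
            ih (t+1) (by simp at ht ⊢; omega)]
          ring

/-- The list `[a (n-1), a (n-2), …, a 0]`. -/
def LL (a : ℕ → K) (n : ℕ) : List K := List.ofFn (fun j : Fin n => a (n - 1 - (j : ℕ)))

lemma LL_length (a : ℕ → K) (n : ℕ) : (LL a n).length = n := by simp [LL]

lemma LL_succ (a : ℕ → K) (n : ℕ) : LL a (n+1) = a n :: LL a n := by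
  rw [LL, List.ofFn_succ, LL]
  refine congrArg₂ _ ?_ ?_
  · congr 1
  · congr 1
    funext j
    simp only [Fin.val_succ]
    congr 1
    omega

def Af (a : ℕ → K) (n k : ℕ) : K :=
  if k ≤ n then (-1 : K) ^ (n - k) * esymmList (LL a n) (n - k) else 0

def Bf (a : ℕ → K) (n k : ℕ) : K :=
  if k ≤ n then hsymmList (LL a (k+1)) (n - k) else 0

lemma Af_of_gt (a : ℕ → K) {n k : ℕ} (h : n < k) : Af a n k = 0 := if_neg (by omega)

lemma Bf_of_gt (a : ℕ → K) {n k : ℕ} (h : n < k) : Bf a n k = 0 := if_neg (by omega)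

lemma Af_zero_left (a : ℕ → K) (m : ℕ) : Af a 0 m = if m = 0 then 1 else 0 := by
  cases m with
  | zero => simp [Af, esymmList_zero]
  | succ m => simp [Af_of_gt a (Nat.succ_pos m)]

lemma Bf_zero_left (a : ℕ → K) (k : ℕ) : Bf a 0 k = if k = 0 then 1 else 0 := by
  cases k with
  | zero => simp [Bf, hsymmList_zero]
  | succ k => simp [Bf_of_gt a (Nat.succ_pos k)]

lemma Af_succ_zero (a : ℕ → K) (n : ℕ) : Af a (n+1) 0 = -(a n * Af a n 0) := by
  simp only [Af, if_pos (Nat.zero_le (n+1)), if_pos (Nat.zero_le n), Nat.sub_zero]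
  rw [LL_succ, esymmList_cons, esymmList_eq_zero (LL a n) (n+1) (by rw [LL_length]; omega),
    pow_succ]
  ring

lemma Af_succ_succ (a : ℕ → K) (n m : ℕ) :
    Af a (n+1) (m+1) = Af a n m - a n * Af a n (m+1) := by
  rcases lt_trichotomy m n with h | h | h
  · simp only [Af, if_pos (show m+1 ≤ n+1 by omega), if_pos (show m ≤ n by omega),
      if_pos (show m+1 ≤ n by omega)]
    have h1 : n + 1 - (m+1) = (n - (m+1)) + 1 := by omega
    have h2 : n - m = (n - (m+1)) + 1 := by omega
    rw [h1, h2, LL_succ, esymmList_cons, pow_succ]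
    ring
  · subst h
    simp only [Af, if_pos (le_refl (m+1)), if_pos (le_refl m),
      if_neg (show ¬ m+1 ≤ m by omega)]
    have e1 : m + 1 - (m+1) = 0 := by omega
    have e2 : m - m = 0 := by omega
    rw [e1, e2]
    simp [esymmList_zero]
  · rw [Af_of_gt a (by omega), Af_of_gt a (by omega), Af_of_gt a (by omega)]
    ring

lemma Bf_succ_zero (a : ℕ → K) (n : ℕ) : Bf a (n+1) 0 = a 0 * Bf a n 0 := by
  simp only [Bf, if_pos (Nat.zero_le (n+1)), if_pos (Nat.zero_le n), Nat.sub_zero]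
  have hL : LL a 1 = [a 0] := by rw [LL_succ]; simp [LL]
  rw [hL, hsymmList_cons, hsymmList_nil]
  ring

lemma Bf_succ_succ (a : ℕ → K) (n k : ℕ) :
    Bf a (n+1) (k+1) = Bf a n k + a (k+1) * Bf a n (k+1) := by
  rcases lt_trichotomy k n with h | h | h
  · simp only [Bf, if_pos (show k+1 ≤ n+1 by omega), if_pos (show k ≤ n by omega),
      if_pos (show k+1 ≤ n by omega)]
    have h1 : n + 1 - (k+1) = (n - (k+1)) + 1 := by omega
    have h2 : n - k = (n - (k+1)) + 1 := by omega
    rw [h1, h2, show LL a (k+1+1) = a (k+1) :: LL a (k+1) from LL_succ a (k+1), hsymmList_cons]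
    ring
  · subst h
    simp only [Bf, if_pos (le_refl (k+1)), if_pos (le_refl k),
      if_neg (show ¬ k+1 ≤ k by omega)]
    have e1 : k + 1 - (k+1) = 0 := by omega
    have e2 : k - k = 0 := by omega
    rw [e1, e2]
    simp [hsymmList_zero]
  · rw [Bf_of_gt a (by omega), Bf_of_gt a (by omega), Bf_of_gt a (by omega)]
    ring

lemma Bf_succ (a : ℕ → K) (n k : ℕ) :
    Bf a (n+1) k = (if k = 0 then 0 else Bf a n (k-1)) + a k * Bf a n k := by
  cases k with
  | zero => rw [if_pos rfl, zero_add]; exact Bf_succ_zero a n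
  | succ k => rw [if_neg (Nat.succ_ne_zero k), Nat.add_sub_cancel]; exact Bf_succ_succ a n k

lemma key (a : ℕ → K) (r : ℕ) : ∀ n, n ≤ r → ∀ m, m ≤ r →
    ∑ k ∈ Finset.range (r+1), Bf a n k * Af a k m = if n = m then 1 else 0 := by
  intro n
  induction n with
  | zero =>
      intro _ m _
      rw [Finset.sum_eq_single 0]
      · rw [Bf_zero_left, if_pos rfl, one_mul, Af_zero_left]
        simp [eq_comm]
      · intro b _ hb
        rw [Bf_zero_left, if_neg hb, zero_mul]
      · intro h; exact absurd (Finset.mem_range.mpr (by omega)) h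
  | succ n ih =>
      intro hn m hm
      have hn' : n ≤ r := by omega
      have step : ∀ k, Bf a (n+1) k * Af a k m =
          (if k = 0 then 0 else Bf a n (k-1)) * Af a k m + a k * (Bf a n k * Af a k m) := by
        intro k; rw [Bf_succ]; ring
      rw [Finset.sum_congr rfl (fun k _ => step k), Finset.sum_add_distrib]
      have hshift : (∑ k ∈ Finset.range (r+1),
          (if k = 0 then 0 else Bf a n (k-1)) * Af a k m)
          = ∑ k ∈ Finset.range (r+1), Bf a n k * Af a (k+1) m := by
        rw [Finset.sum_range_succ' (fun k => (if k = 0 then 0 else Bf a n (k-1)) * Af a k m) r]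
        rw [Finset.sum_range_succ (fun k => Bf a n k * Af a (k+1) m) r]
        rw [Bf_of_gt a (show n < r by omega), zero_mul, add_zero]
        simp
      rw [hshift]
      cases m with
      | zero =>
          have stepA : ∀ k, Bf a n k * Af a (k+1) 0 = -(a k * (Bf a n k * Af a k 0)) := by
            intro k; rw [Af_succ_zero]; ring
          rw [Finset.sum_congr rfl (fun k _ => stepA k)]
          simp
      | succ m =>
          have stepA : ∀ k, Bf a n k * Af a (k+1) (m+1) =
              Bf a n k * Af a k m - a k * (Bf a n k * Af a k (m+1)) := by
            intro k; rw [Af_succ_succ]; ring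
          rw [Finset.sum_congr rfl (fun k _ => stepA k), Finset.sum_sub_distrib]
          have hc : ∀ x y : K, x - y + y = x := fun x y => by ring
          rw [hc, ih hn' m (by omega)]
          rcases eq_or_ne n m with h | h
          · simp [h]
          · rw [if_neg h, if_neg (by omega)]

def aSeq (v w : ℤ → K) (α β : ℤ) (i : ℕ) : K := v (α + i) * w (β - i)

lemma cV_entry (v w : ℤ → K) (α β : ℤ) (n k : ℕ) :
    (-1 : K) ^ (n - k) * cV v w α (β - n + 1) (n : ℤ) (k : ℤ) = Af (aSeq v w α β) n k := by
  by_cases h : k ≤ n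
  · rw [cV, if_pos ⟨Int.natCast_nonneg k, by exact_mod_cast h⟩, Af, if_pos h]
    have ht : ((n : ℤ) - (k : ℤ)).toNat = n - k := by omega
    have hL : (List.ofFn fun j : Fin ((n : ℤ)).toNat =>
        v (α + (n : ℤ) - 1 - ((j : ℕ) : ℤ)) * w ((β - (n : ℕ) + 1) + ((j : ℕ) : ℤ)))
        = LL (aSeq v w α β) n := by
      rw [show ((n : ℤ)).toNat = n from by omega, LL]
      congr 1
      funext j
      have hj : (j : ℕ) < n := j.isLt
      simp only [aSeq]
      rw [show α + (n : ℤ) - 1 - ((j : ℕ) : ℤ) = α + ((n - 1 - (j : ℕ) : ℕ) : ℤ) from by omega,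
        show (β - (n : ℕ) + 1) + ((j : ℕ) : ℤ) = β - ((n - 1 - (j : ℕ) : ℕ) : ℤ) from by omega]
    rw [ht, hL]
  · rw [cV, if_neg (fun hh => h (by exact_mod_cast hh.2)), Af, if_neg h, mul_zero]

lemma SV_entry (v w : ℤ → K) (α β : ℤ) (n k : ℕ) :
    SV v w α (β - k) (n : ℤ) (k : ℤ) = Bf (aSeq v w α β) n k := by
  by_cases h : k ≤ n
  · rw [SV, if_pos ⟨Int.natCast_nonneg k, by exact_mod_cast h⟩, Bf, if_pos h]
    have ht : ((n : ℤ) - (k : ℤ)).toNat = n - k := by omega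
    have hL : (List.ofFn fun j : Fin (((k : ℤ)).toNat + 1) =>
        v (α + (k : ℤ) - ((j : ℕ) : ℤ)) * w ((β - (k : ℕ)) + ((j : ℕ) : ℤ)))
        = LL (aSeq v w α β) (k + 1) := by
      rw [show ((k : ℤ)).toNat = k from by omega, LL]
      congr 1
      funext j
      have hj : (j : ℕ) < k + 1 := j.isLt
      simp only [aSeq]
      rw [show α + (k : ℤ) - ((j : ℕ) : ℤ) = α + ((k + 1 - 1 - (j : ℕ) : ℕ) : ℤ) from by omega,
        show (β - (k : ℕ)) + ((j : ℕ) : ℤ) = β - ((k + 1 - 1 - (j : ℕ) : ℕ) : ℤ) from by omega]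
    rw [ht, hL]
  · rw [SV, if_neg (fun hh => h (by exact_mod_cast hh.2)), Bf, if_neg h]

theorem cV_SV_matrix_inverse (v w : ℤ → K) (α β : ℤ) (r : ℕ) :
    (Matrix.of fun n k : Fin (r + 1) =>
        (-1 : K) ^ ((n : ℕ) - (k : ℕ)) * cV v w α (β - (n : ℕ) + 1) ((n : ℕ) : ℤ) ((k : ℕ) : ℤ)) *
      (Matrix.of fun n k : Fin (r + 1) =>
        SV v w α (β - (k : ℕ)) ((n : ℕ) : ℤ) ((k : ℕ) : ℤ)) = 1 ∧
    (Matrix.of fun n k : Fin (r + 1) =>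
        SV v w α (β - (k : ℕ)) ((n : ℕ) : ℤ) ((k : ℕ) : ℤ)) *
      (Matrix.of fun n k : Fin (r + 1) =>
        (-1 : K) ^ ((n : ℕ) - (k : ℕ)) * cV v w α (β - (n : ℕ) + 1) ((n : ℕ) : ℤ) ((k : ℕ) : ℤ)) = 1 := by
  set a := aSeq v w α β with ha
  have hA : (Matrix.of fun n k : Fin (r + 1) =>
      (-1 : K) ^ ((n : ℕ) - (k : ℕ)) * cV v w α (β - (n : ℕ) + 1) ((n : ℕ) : ℤ) ((k : ℕ) : ℤ))
      = Matrix.of fun n k : Fin (r + 1) => Af a (n : ℕ) (k : ℕ) := by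
    ext n k
    exact cV_entry v w α β n k
  have hB : (Matrix.of fun n k : Fin (r + 1) =>
      SV v w α (β - (k : ℕ)) ((n : ℕ) : ℤ) ((k : ℕ) : ℤ))
      = Matrix.of fun n k : Fin (r + 1) => Bf a (n : ℕ) (k : ℕ) := by
    ext n k
    exact SV_entry v w α β n k
  rw [hA, hB]
  have hBA : (Matrix.of fun n k : Fin (r + 1) => Bf a (n : ℕ) (k : ℕ)) *
      (Matrix.of fun n k : Fin (r + 1) => Af a (n : ℕ) (k : ℕ)) = 1 := by
    ext n m
    rw [Matrix.mul_apply]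
    simp only [Matrix.of_apply]
    rw [Fin.sum_univ_eq_sum_range (fun i => Bf a (n : ℕ) i * Af a i (m : ℕ)) (r + 1)]
    rw [key a r (n : ℕ) (Nat.lt_succ_iff.mp n.isLt) (m : ℕ) (Nat.lt_succ_iff.mp m.isLt)]
    simp [Matrix.one_apply, Fin.val_eq_val]
  exact ⟨mul_eq_one_comm.mp hBA, hBA⟩
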